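/- If C is a connected graph of even order with no perfect matching, v a vertex of C, S a vertex subset of a graph G containing C as an S-component, and S' = S ∪ {v}, then df(S') ≥ df(S) and Df(S') < Df(S). -/

import Mathlib

open SimpleGraph Set

variable {V : Type*} [Fintype V] [DecidableEq V]

/-- The vertex set (in `V`) of a connected component of the graph induced on `B`. -/
def compSupp (G : SimpleGraph V) (B : Set V)
    (c : (G.induce B).ConnectedComponent) : Set V :=
  Subtype.val '' c.supp

/-- `A` is (the vertex set of) a connected component of `G` restricted to `B`. -/
def IsCompOf (G : SimpleGraph V) (B : Set V) (A : Set V) : Prop :=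
  ∃ c : (G.induce B).ConnectedComponent, A = compSupp G B c

/-- The number of odd connected components of `G` restricted to `B`. -/
noncomputable def oddComps (G : SimpleGraph V) (B : Set V) : ℕ :=
  Set.ncard {c : (G.induce B).ConnectedComponent | Odd (compSupp G B c).ncard}

/-- The deficiency `df(S) = od(S) - |S|`. -/
noncomputable def df (G : SimpleGraph V) (S : Set V) : ℤ :=
  (oddComps G Sᶜ : ℤ) - S.ncard

/-- The induced subgraph on `A` has a perfect matching. -/
def HasPM (G : SimpleGraph V) (A : Set V) : Prop :=
  ∃ M : Subgraph (G.induce A), M.IsPerfectMatching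

/-- `Df(S)`: total number of vertices in components of `G - S` with no perfect matching. -/
noncomputable def Df (G : SimpleGraph V) (S : Set V) : ℕ :=
  Set.ncard (⋃ c ∈ {c : (G.induce Sᶜ).ConnectedComponent |
    ¬ HasPM G (compSupp G Sᶜ c)}, compSupp G Sᶜ c)

/-- The set of `M`-exposed vertices. -/
def exposed (G : SimpleGraph V) (M : Subgraph G) : Set V :=
  {v | v ∉ M.support}

/-- `A` induces a factor-critical graph. -/
def FactorCritical (G : SimpleGraph V) (A : Set V) : Prop :=
  ∀ v ∈ A, HasPM G (A \ {v})

/-- The neighborhood of `T ⊆ S` in the bipartite minor `⟨G,S⟩`: the odd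
`S`-components adjacent to some vertex of `T`. -/
def minorNbhd (G : SimpleGraph V) (S T : Set V) :
    Set (G.induce Sᶜ).ConnectedComponent :=
  {c | Odd (compSupp G Sᶜ c).ncard ∧ ∃ u ∈ T, ∃ w ∈ compSupp G Sᶜ c, G.Adj u w}

/-- `S` is a Gallai-Edmonds set of `G`. -/
def GallaiEdmonds (G : SimpleGraph V) (S : Set V) : Prop :=
  (∀ c : (G.induce Sᶜ).ConnectedComponent,
      Even (compSupp G Sᶜ c).ncard → HasPM G (compSupp G Sᶜ c)) ∧
  (∀ c : (G.induce Sᶜ).ConnectedComponent,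
      Odd (compSupp G Sᶜ c).ncard → FactorCritical G (compSupp G Sᶜ c)) ∧
  (∀ T ⊆ S, T.Nonempty → T.ncard + 1 ≤ (minorNbhd G S T).ncard)

/-- `w` and `w'` lie in the same `S`-component. -/
def SameComp (G : SimpleGraph V) (S : Set V) (w w' : V) : Prop :=
  ∃ c : (G.induce Sᶜ).ConnectedComponent,
    w ∈ compSupp G Sᶜ c ∧ w' ∈ compSupp G Sᶜ c

/-- `M` is a maximum matching of `G`. -/
def IsMaximumMatching (G : SimpleGraph V) (M : Subgraph G) : Prop :=
  M.IsMatching ∧ ∀ M' : Subgraph G, M'.IsMatching →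
    M'.edgeSet.ncard ≤ M.edgeSet.ncard

/-
Let `B = Sᶜ` and let `A` be the even component of `G[B]` through `v`. Every component of `G[B]`
other than `A` avoids `v` and hence stays a component of `G[B \ {v}]`. Since `A` is even, all odd
components survive, so `od` does not drop; and `od(B) ≡ |B|` (mod 2) forces it to grow by at
least one as `|B|` drops by one, which pays for the new vertex of `S`. Every component of
`G[B \ {v}]` either lies inside `A` or is an old component, so the vertices of components without
a perfect matching stay among the old ones, while `v` itself leaves them.
-/

theorem Set.compl_insert {α : Type*} (s : Set α) (a : α) : (insert a s)ᶜ = sᶜ \ {a} := by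
  rw [Set.insert_eq, Set.compl_union, Set.sdiff_eq_compl_inter]

namespace SimpleGraph

omit [Fintype V] [DecidableEq V]

variable {G : SimpleGraph V} {B B' X Y : Set V}

lemma mem_compSupp {c : (G.induce B).ConnectedComponent} {x : V} :
    x ∈ compSupp G B c ↔ ∃ h : x ∈ B, (G.induce B).connectedComponentMk ⟨x, h⟩ = c := by
  simp [compSupp]

lemma compSupp_nonempty (c : (G.induce B).ConnectedComponent) : (compSupp G B c).Nonempty :=
  c.nonempty_supp.image _

lemma ncard_compSupp (c : (G.induce B).ConnectedComponent) :
    (compSupp G B c).ncard = c.supp.ncard :=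
  Set.ncard_image_of_injective _ Subtype.val_injective

lemma compSupp_injective : Function.Injective (compSupp G B) := by
  intro c c' h
  obtain ⟨x, hx⟩ := compSupp_nonempty c
  obtain ⟨_, rfl⟩ := mem_compSupp.1 hx
  obtain ⟨_, rfl⟩ := mem_compSupp.1 (h ▸ hx)
  rfl

lemma exists_isCompOf_mem {x : V} (hx : x ∈ B) : ∃ X, IsCompOf G B X ∧ x ∈ X :=
  ⟨_, ⟨_, rfl⟩, mem_compSupp.2 ⟨hx, rfl⟩⟩

lemma IsCompOf.subset (hX : IsCompOf G B X) : X ⊆ B := by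
  obtain ⟨c, rfl⟩ := hX
  exact fun x hx => (mem_compSupp.1 hx).1

lemma IsCompOf.eq_of_mem {x : V} (hX : IsCompOf G B X) (hY : IsCompOf G B Y) (hxX : x ∈ X)
    (hxY : x ∈ Y) : X = Y := by
  obtain ⟨c, rfl⟩ := hX
  obtain ⟨c', rfl⟩ := hY
  obtain ⟨_, rfl⟩ := mem_compSupp.1 hxX
  obtain ⟨_, rfl⟩ := mem_compSupp.1 hxY
  rfl

lemma IsCompOf.of_subset (hX : IsCompOf G B X) (hXB' : X ⊆ B') (hB' : B' ⊆ B) :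
    IsCompOf G B' X := by
  obtain ⟨c, rfl⟩ := hX
  obtain ⟨x, hx⟩ := compSupp_nonempty c
  obtain ⟨hxB, hxc⟩ := mem_compSupp.1 hx
  refine ⟨(G.induce B').connectedComponentMk ⟨x, hXB' hx⟩, Set.Subset.antisymm ?_ ?_⟩
  · intro y hy
    obtain ⟨hyB, hyc⟩ := mem_compSupp.1 hy
    classical
    obtain ⟨p⟩ := ConnectedComponent.exact (hyc.trans hxc.symm)
    -- the walk stays inside the component `c`, hence inside `B'`
    have hp : ∀ z ∈ (p.map (Embedding.induce B).toHom).support, z ∈ B' := by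
      simp only [Walk.support_map, List.mem_map]
      rintro _ ⟨w, hw, rfl⟩
      refine hXB' (mem_compSupp.2 ⟨w.2, ?_⟩)
      rw [← hyc]
      exact ConnectedComponent.sound (p.takeUntil w hw).reachable.symm
    exact mem_compSupp.2 ⟨hXB' hy, ConnectedComponent.sound ⟨(p.map _).induce B' hp⟩⟩
  · intro y hy
    obtain ⟨hyB', hy⟩ := mem_compSupp.1 hy
    refine mem_compSupp.2 ⟨hB' hyB', hxc ▸ ConnectedComponent.sound ?_⟩
    exact (ConnectedComponent.exact hy).map (G.induceHomOfLE hB').toHom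

lemma oddComps_eq_ncard_oddComponents : oddComps G B = (G.induce B).oddComponents.ncard := by
  simp only [oddComps, oddComponents, ncard_compSupp]

lemma oddComps_eq_ncard_isCompOf : oddComps G B = {X | IsCompOf G B X ∧ Odd X.ncard}.ncard := by
  rw [oddComps, ← Set.ncard_image_of_injective _ compSupp_injective]
  congr 1
  ext X
  constructor
  · rintro ⟨c, hc, rfl⟩
    exact ⟨⟨c, rfl⟩, hc⟩
  · rintro ⟨⟨c, rfl⟩, hc⟩
    exact ⟨c, hc, rfl⟩

lemma Df_eq_ncard (S : Set V) :
    Df G S = {x | ∃ X, IsCompOf G Sᶜ X ∧ ¬ HasPM G X ∧ x ∈ X}.ncard := by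
  simp only [Df, IsCompOf]
  congr 1
  ext x
  simp only [Set.mem_iUnion, Set.mem_ofPred_eq]
  constructor
  · rintro ⟨c, hc, hx⟩
    exact ⟨_, ⟨c, rfl⟩, hc, hx⟩
  · rintro ⟨_, ⟨c, rfl⟩, hc, hx⟩
    exact ⟨c, hc, hx⟩

variable [Finite V]

lemma odd_oddComps_iff : Odd (oddComps G B) ↔ Odd B.ncard := by
  rw [oddComps_eq_ncard_oddComponents, odd_ncard_oddComponents, Nat.card_coe_set_eq]

lemma oddComps_le_of_subset (hB' : B' ⊆ B)
    (h : ∀ X, IsCompOf G B X → Odd X.ncard → X ⊆ B') : oddComps G B ≤ oddComps G B' := by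
  rw [oddComps_eq_ncard_isCompOf, oddComps_eq_ncard_isCompOf]
  exact Set.ncard_le_ncard fun X ⟨hX, hodd⟩ => ⟨hX.of_subset (h X hX hodd) hB', hodd⟩

variable {S A : Set V} {v : V}

lemma df_le_df_insert (hA : IsCompOf G Sᶜ A) (hEven : Even A.ncard) (hv : v ∈ A) :
    df G S ≤ df G (insert v S) := by
  have hvS : v ∉ S := hA.subset hv
  have hle : oddComps G Sᶜ ≤ oddComps G (Sᶜ \ {v}) := by
    refine oddComps_le_of_subset sdiff_subset fun X hX hodd => ?_
    refine subset_sdiff_singleton hX.subset fun hvX => ?_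
    rw [hA.eq_of_mem hX hv hvX] at hEven
    exact Nat.not_even_iff_odd.2 hodd hEven
  have hpar : Odd (oddComps G Sᶜ) ↔ ¬ Odd (oddComps G (Sᶜ \ {v})) := by
    rw [odd_oddComps_iff, odd_oddComps_iff, ← ncard_sdiff_singleton_add_one (hA.subset hv),
      Nat.odd_add_one]
  have hlt : oddComps G Sᶜ < oddComps G (Sᶜ \ {v}) :=
    hle.lt_of_ne fun h => by rw [h] at hpar; exact iff_not_self hpar
  rw [df, df, Set.compl_insert, ncard_insert_of_notMem hvS]
  push_cast
  omega

lemma Df_insert_lt (hA : IsCompOf G Sᶜ A) (hnpm : ¬ HasPM G A) (hv : v ∈ A) :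
    Df G (insert v S) < Df G S := by
  rw [Df_eq_ncard, Df_eq_ncard, Set.compl_insert]
  refine Set.ncard_lt_ncard ((Set.ssubset_iff_of_subset ?_).2 ⟨v, ⟨A, hA, hnpm, hv⟩, ?_⟩)
  · rintro x ⟨X, hX, hXpm, hxX⟩
    obtain ⟨Y, hY, hxY⟩ := exists_isCompOf_mem (hX.subset hxX).1
    by_cases hvY : v ∈ Y
    · exact ⟨A, hA, hnpm, hA.eq_of_mem hY hv hvY ▸ hxY⟩
    · have hY' := hY.of_subset (subset_sdiff_singleton hY.subset hvY) sdiff_subset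
      exact ⟨Y, hY, hY'.eq_of_mem hX hxY hxX ▸ hXpm, hxY⟩
  · rintro ⟨X, hX, -, hvX⟩
    exact (hX.subset hvX).2 rfl

end SimpleGraph

/-- Adding a vertex of an even `S`-component with no perfect matching to `S`
does not decrease the deficiency and strictly decreases `Df`. -/
theorem stmt_5 (G : SimpleGraph V) (S A : Set V) (v : V)
    (hC : IsCompOf G Sᶜ A) (hEven : Even A.ncard)
    (hnpm : ¬ HasPM G A) (hv : v ∈ A) :
    df G S ≤ df G (insert v S) ∧ Df G (insert v S) < Df G S :=
  ⟨df_le_df_insert hC hEven hv, Df_insert_lt hC hnpm hv⟩
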